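/- Let (ρ, u) be a smooth (C^∞) solution of the steady isentropic compressible Euler equations on U with ρ > 0 and u₁ > 0 everywhere, and suppose the Bernoulli function B is constant on U. Then G satisfies the Riccati-type equation DG − (c²(ρ)/(B − h(ρ))) (∂₁s) G² + (c²(ρ)/(B − h(ρ))) G (Ds) = 0 on U, where s = log ρ. -/

import Mathlib

/-- Partial derivative in direction `i` of a scalar function on `ℝ³`. -/
noncomputable def pd (i : Fin 3) (f : (Fin 3 → ℝ) → ℝ) (x : Fin 3 → ℝ) : ℝ :=
  fderiv ℝ f x (Pi.single i 1)

/-- The operator `D = ∂₁ + β₂ ∂₂ + β₃ ∂₃`. -/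
noncomputable def Dop (β₂ β₃ : (Fin 3 → ℝ) → ℝ) (f : (Fin 3 → ℝ) → ℝ) (x : Fin 3 → ℝ) : ℝ :=
  pd 0 f x + β₂ x * pd 1 f x + β₃ x * pd 2 f x

variable {f g : (Fin 3 → ℝ) → ℝ} {x : Fin 3 → ℝ}

theorem pd_mul (hf : DifferentiableAt ℝ f x) (hg : DifferentiableAt ℝ g x) (i : Fin 3) :
    pd i (fun y => f y * g y) x = pd i f x * g x + f x * pd i g x := by
  unfold pd
  rw [fderiv_fun_mul hf hg]
  simp only [ContinuousLinearMap.add_apply, ContinuousLinearMap.smul_apply, smul_eq_mul]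
  ring

theorem pd_inv (hg : DifferentiableAt ℝ g x) (h0 : g x ≠ 0) (i : Fin 3) :
    pd i (fun y => (g y)⁻¹) x = -pd i g x / g x ^ 2 := by
  unfold pd
  rw [show (fun y => (g y)⁻¹) = (fun t : ℝ => t⁻¹) ∘ g from rfl,
    ((hasDerivAt_inv h0).comp_hasFDerivAt x hg.hasFDerivAt).fderiv]
  simp only [ContinuousLinearMap.smul_apply, smul_eq_mul]
  ring

theorem pd_div (hf : DifferentiableAt ℝ f x) (hg : DifferentiableAt ℝ g x) (h0 : g x ≠ 0)
    (i : Fin 3) :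
    pd i (fun y => f y / g y) x = (pd i f x * g x - f x * pd i g x) / g x ^ 2 := by
  have h : (fun y => f y / g y) = fun y => f y * (g y)⁻¹ := by
    funext y; rw [div_eq_mul_inv]
  rw [h, pd_mul hf (hg.fun_inv h0) i, pd_inv hg h0 i]
  field_simp
  ring

theorem pd_log (hf : DifferentiableAt ℝ f x) (h0 : f x ≠ 0) (i : Fin 3) :
    pd i (fun y => Real.log (f y)) x = pd i f x / f x := by
  unfold pd
  rw [show (fun y => Real.log (f y)) = Real.log ∘ f from rfl,
    ((Real.hasDerivAt_log h0).comp_hasFDerivAt x hf.hasFDerivAt).fderiv]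
  simp only [ContinuousLinearMap.smul_apply, smul_eq_mul]
  ring

theorem pd_rpow (hf : DifferentiableAt ℝ f x) (h0 : f x ≠ 0) (p : ℝ) (i : Fin 3) :
    pd i (fun y => f y ^ p) x = p * f x ^ (p - 1) * pd i f x := by
  unfold pd
  rw [show (fun y => f y ^ p) = (fun t : ℝ => t ^ p) ∘ f from rfl,
    ((Real.hasDerivAt_rpow_const (Or.inl h0)).comp_hasFDerivAt x hf.hasFDerivAt).fderiv]
  simp only [ContinuousLinearMap.smul_apply, smul_eq_mul]

theorem pd_div_const (hf : DifferentiableAt ℝ f x) (c : ℝ) (i : Fin 3) :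
    pd i (fun y => f y / c) x = pd i f x / c := by
  have h : (fun y => f y / c) = fun y => c⁻¹ * f y := by funext y; ring
  unfold pd
  rw [h, fderiv_const_mul hf]
  simp only [ContinuousLinearMap.smul_apply, smul_eq_mul]
  ring

theorem pd_sq (hf : DifferentiableAt ℝ f x) (i : Fin 3) :
    pd i (fun y => f y ^ 2) x = 2 * f x * pd i f x := by
  have h : (fun y => f y ^ 2) = fun y => f y * f y := by funext y; ring
  rw [h, pd_mul hf hf]
  ring

theorem pd_const (c : ℝ) (i : Fin 3) : pd i (fun _ : Fin 3 → ℝ => c) x = 0 := by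
  unfold pd; rw [fderiv_fun_const]; simp

theorem pd_add (hf : DifferentiableAt ℝ f x) (hg : DifferentiableAt ℝ g x) (i : Fin 3) :
    pd i (fun y => f y + g y) x = pd i f x + pd i g x := by
  unfold pd
  rw [fderiv_fun_add hf hg]
  simp

set_option maxHeartbeats 2000000 in
/-- the Riccati-type equation (3.18) for `G = 1 + β₂² + β₃²` for a flow
with constant Bernoulli function. -/
theorem riccati_equation_for_G
    (U : Set (Fin 3 → ℝ)) (hU : IsOpen U) (γ : ℝ) (hγ1 : 1 < γ) (hγ3 : γ < 3)
    (ρ : (Fin 3 → ℝ) → ℝ) (u : Fin 3 → (Fin 3 → ℝ) → ℝ)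
    (hρ : ContDiffOn ℝ (⊤ : ℕ∞) ρ U) (hu : ∀ i, ContDiffOn ℝ (⊤ : ℕ∞) (u i) U)
    (hρpos : ∀ x ∈ U, 0 < ρ x) (hu1pos : ∀ x ∈ U, 0 < u 0 x)
    (hmass : ∀ x ∈ U,
      pd 0 (fun y => ρ y * u 0 y) x + pd 1 (fun y => ρ y * u 1 y) x
        + pd 2 (fun y => ρ y * u 2 y) x = 0)
    (hmom : ∀ i : Fin 3, ∀ x ∈ U,
      pd 0 (fun y => ρ y * u i y * u 0 y) x + pd 1 (fun y => ρ y * u i y * u 1 y) x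
        + pd 2 (fun y => ρ y * u i y * u 2 y) x + pd i (fun y => ρ y ^ γ / γ) x = 0)
    (s β₂ β₃ B G : (Fin 3 → ℝ) → ℝ)
    (hs : s = fun y => Real.log (ρ y))
    (hβ₂ : β₂ = fun y => u 1 y / u 0 y) (hβ₃ : β₃ = fun y => u 2 y / u 0 y)
    (hB : B = fun y => (u 0 y ^ 2 + u 1 y ^ 2 + u 2 y ^ 2) / 2 + ρ y ^ (γ - 1) / (γ - 1))
    (hG : G = fun y => 1 + β₂ y ^ 2 + β₃ y ^ 2)
    (B₀ : ℝ) (hBconst : ∀ x ∈ U, B x = B₀) :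
    ∀ x ∈ U,
      Dop β₂ β₃ G x
        - ρ x ^ (γ - 1) / (B x - ρ x ^ (γ - 1) / (γ - 1)) * pd 0 s x * G x ^ 2
        + ρ x ^ (γ - 1) / (B x - ρ x ^ (γ - 1) / (γ - 1)) * G x * Dop β₂ β₃ s x = 0 := by
  subst hs hβ₂ hβ₃ hB hG
  intro x hx
  have hxU : U ∈ nhds x := hU.mem_nhds hx
  have hdρ : DifferentiableAt ℝ ρ x := (hρ.contDiffAt hxU).differentiableAt (by simp)
  have hdu : ∀ i, DifferentiableAt ℝ (u i) x :=
    fun i => ((hu i).contDiffAt hxU).differentiableAt (by simp)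
  have hr : ρ x ≠ 0 := ne_of_gt (hρpos x hx)
  have ha : u 0 x ≠ 0 := ne_of_gt (hu1pos x hx)
  have hS : u 0 x ^ 2 + u 1 x ^ 2 + u 2 x ^ 2 ≠ 0 := by positivity
  have e1 : ∀ i j : Fin 3, pd j (fun y => ρ y * u i y) x
      = pd j ρ x * u i x + ρ x * pd j (u i) x := fun i j => pd_mul hdρ (hdu i) j
  have e2 : ∀ i k j : Fin 3, pd j (fun y => ρ y * u i y * u k y) x
      = (pd j ρ x * u i x + ρ x * pd j (u i) x) * u k x
        + ρ x * u i x * pd j (u k) x := by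
    intro i k j
    rw [pd_mul (hdρ.fun_mul (hdu i)) (hdu k) j, pd_mul hdρ (hdu i) j]
  have epress : ∀ j : Fin 3, pd j (fun y => ρ y ^ γ / γ) x = ρ x ^ (γ - 1) * pd j ρ x := by
    intro j
    rw [pd_div_const (hdρ.rpow_const (Or.inl hr)) γ j, pd_rpow hdρ hr γ j]
    have hγ0 : γ ≠ 0 := by linarith
    field_simp
  have es : ∀ j : Fin 3, pd j (fun y => Real.log (ρ y)) x = pd j ρ x / ρ x :=
    fun j => pd_log hdρ hr j
  have hdβ : ∀ i, DifferentiableAt ℝ (fun y => u i y / u 0 y) x :=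
    fun i => by simpa only [div_eq_mul_inv] using (hdu i).fun_mul ((hdu 0).fun_inv ha)
  have eβ : ∀ i j : Fin 3, pd j (fun y => u i y / u 0 y) x
      = (pd j (u i) x * u 0 x - u i x * pd j (u 0) x) / u 0 x ^ 2 :=
    fun i j => pd_div (hdu i) (hdu 0) ha j
  have eG : ∀ j : Fin 3,
      pd j (fun y => 1 + (u 1 y / u 0 y) ^ 2 + (u 2 y / u 0 y) ^ 2) x
      = 2 * (u 1 x / u 0 x)
            * ((pd j (u 1) x * u 0 x - u 1 x * pd j (u 0) x) / u 0 x ^ 2)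
        + 2 * (u 2 x / u 0 x)
            * ((pd j (u 2) x * u 0 x - u 2 x * pd j (u 0) x) / u 0 x ^ 2) := by
    intro j
    rw [pd_add ((differentiableAt_const 1).fun_add ((hdβ 1).fun_pow 2)) ((hdβ 2).fun_pow 2) j,
      pd_add (differentiableAt_const 1) ((hdβ 1).fun_pow 2) j, pd_const,
      pd_sq (hdβ 1) j, pd_sq (hdβ 2) j, eβ 1 j, eβ 2 j]
    ring
  have hM : ∀ i : Fin 3,
      ρ x * (u 0 x * pd 0 (u i) x + u 1 x * pd 1 (u i) x + u 2 x * pd 2 (u i) x)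
        + ρ x ^ (γ - 1) * pd i ρ x = 0 := by
    intro i
    have hm := hmass x hx
    have hmo := hmom i x hx
    simp only [e1] at hm
    simp only [e2, epress] at hmo
    linear_combination hmo - u i x * hm
  simp only [Dop, eG, eβ, es]
  have hBh : (u 0 x ^ 2 + u 1 x ^ 2 + u 2 x ^ 2) / 2 + ρ x ^ (γ - 1) / (γ - 1)
      - ρ x ^ (γ - 1) / (γ - 1) = (u 0 x ^ 2 + u 1 x ^ 2 + u 2 x ^ 2) / 2 := by ring
  rw [hBh]
  linear_combination (norm := (field_simp; ring))
    (-(2 * (u 1 x ^ 2 + u 2 x ^ 2)) / (u 0 x ^ 4 * ρ x)) * hM 0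
    + (2 * u 1 x / (u 0 x ^ 3 * ρ x)) * hM 1
    + (2 * u 2 x / (u 0 x ^ 3 * ρ x)) * hM 2
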